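/- arXiv:2604.22365 — 5 statements merged into one kernel-verified Lean document; each statement's English description precedes it below -/
import Mathlib

section
/- Let n be a nonempty finite index type and let A be an n × n matrix over the real numbers that is weakly chained diagonally dominant. Then A is nonsingular, i.e. det A ≠ 0. -/
/-!
Suppose `A *ᵥ x = 0` with `x ≠ 0` and pick `i` where `|x i|` is maximal. Row `i` of `A *ᵥ x = 0`
gives `|A i i| |x i| ≤ ∑_{j ≠ i} |A i j| |x j| ≤ (∑_{j ≠ i} |A i j|) |x i|`, so row `i` is not
strictly dominant, and if it is weakly dominant all these inequalities are equalities, which forces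
`|x j| = |x i|` whenever `A i j ≠ 0`. Maximality therefore propagates along the chain starting at
`i` up to a strictly dominant row, a contradiction.
-/

namespace Matrix

open Finset

variable {n : Type*} [Fintype n] [DecidableEq n] {A : Matrix n n ℝ} {x : n → ℝ} {i : n}

theorem abs_diag_mul_abs_le_of_mulVec_eq_zero (hAx : (A *ᵥ x) i = 0) :
    |A i i| * |x i| ≤ ∑ j ∈ univ.erase i, |A i j| * |x j| := by
  have hrow : A i i * x i = -∑ j ∈ univ.erase i, A i j * x j := by
    rw [eq_neg_iff_add_eq_zero, add_sum_erase _ (fun j ↦ A i j * x j) (mem_univ i)]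
    exact hAx
  calc |A i i| * |x i| = |∑ j ∈ univ.erase i, A i j * x j| := by rw [← abs_mul, hrow, abs_neg]
    _ ≤ ∑ j ∈ univ.erase i, |A i j * x j| := abs_sum_le_sum_abs _ _
    _ = ∑ j ∈ univ.erase i, |A i j| * |x j| := by simp only [abs_mul]

theorem sum_abs_mul_abs_le_of_abs_le (hmax : ∀ j, |x j| ≤ |x i|) :
    ∑ j ∈ univ.erase i, |A i j| * |x j| ≤ (∑ j ∈ univ.erase i, |A i j|) * |x i| := by
  rw [sum_mul]
  exact sum_le_sum fun j _ ↦ mul_le_mul_of_nonneg_left (hmax j) (abs_nonneg _)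

theorem abs_diag_le_sum_abs_of_mulVec_eq_zero (hAx : (A *ᵥ x) i = 0) (hx : x ≠ 0)
    (hmax : ∀ j, |x j| ≤ |x i|) : |A i i| ≤ ∑ j ∈ univ.erase i, |A i j| := by
  obtain ⟨j, hj⟩ := Function.ne_iff.mp hx
  have hxi : 0 < |x i| := (abs_pos.mpr hj).trans_le (hmax j)
  exact le_of_mul_le_mul_right
    ((abs_diag_mul_abs_le_of_mulVec_eq_zero hAx).trans (sum_abs_mul_abs_le_of_abs_le hmax)) hxi

theorem abs_apply_eq_of_mulVec_eq_zero (hAx : (A *ᵥ x) i = 0)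
    (hweak : ∑ j ∈ univ.erase i, |A i j| ≤ |A i i|) (hmax : ∀ j, |x j| ≤ |x i|) {j : n}
    (hij : A i j ≠ 0) : |x j| = |x i| := by
  obtain rfl | hji := eq_or_ne j i
  · rfl
  have hgap : ∑ k ∈ univ.erase i, |A i k| * (|x i| - |x k|) ≤ 0 := by
    have := abs_diag_mul_abs_le_of_mulVec_eq_zero hAx
    have := mul_le_mul_of_nonneg_right hweak (abs_nonneg (x i))
    simp only [mul_sub, sum_sub_distrib, ← sum_mul]
    linarith
  have hnonneg : ∀ k ∈ univ.erase i, 0 ≤ |A i k| * (|x i| - |x k|) := fun k _ ↦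
    mul_nonneg (abs_nonneg _) (sub_nonneg.mpr (hmax k))
  have hterm := (sum_eq_zero_iff_of_nonneg hnonneg).mp (hgap.antisymm (sum_nonneg hnonneg))
    j (mem_erase.mpr ⟨hji, mem_univ j⟩)
  have := (mul_eq_zero.mp hterm).resolve_left (abs_ne_zero.mpr hij)
  linarith

end Matrix

open Matrix in
theorem wcdd_nonsingular_general {n : Type*} [Fintype n] [DecidableEq n]
    (A : Matrix n n ℝ)
    (hweak : ∀ i : n, ∑ j ∈ Finset.univ.erase i, |A i j| ≤ |A i i|)
    (hchain : ∀ i : n, ∃ (r : ℕ) (c : ℕ → n), c 0 = i ∧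
      (∀ m < r, A (c m) (c (m + 1)) ≠ 0) ∧
      ∑ j ∈ Finset.univ.erase (c r), |A (c r) j| < |A (c r) (c r)|) :
    A.det ≠ 0 := by
  intro hdet
  obtain ⟨x, hx, hAx⟩ := exists_mulVec_eq_zero_iff.mpr hdet
  obtain ⟨j, -⟩ := Function.ne_iff.mp hx
  have : Nonempty n := ⟨j⟩
  obtain ⟨i, hi⟩ := Finite.exists_max fun j ↦ |x j|
  obtain ⟨r, c, rfl, hc, hstrict⟩ := hchain i
  have hmax : ∀ m ≤ r, ∀ k, |x k| ≤ |x (c m)| := by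
    intro m
    induction m with
    | zero => exact fun _ ↦ hi
    | succ m ih =>
      intro hm
      rw [abs_apply_eq_of_mulVec_eq_zero (congrFun hAx _) (hweak _) (ih (by omega)) (hc m hm)]
      exact ih (by omega)
  exact (abs_diag_le_sum_abs_of_mulVec_eq_zero (congrFun hAx _) hx (hmax r le_rfl)).not_gt hstrict

/-- A real square matrix that is weakly chained diagonally dominant is nonsingular. -/
theorem wcdd_nonsingular {n : Type*} [Fintype n] [DecidableEq n] [Nonempty n]
    (A : Matrix n n ℝ)
    (hweak : ∀ i : n, ∑ j ∈ Finset.univ.erase i, |A i j| ≤ |A i i|)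
    (hchain : ∀ i : n, ∃ (r : ℕ) (c : ℕ → n), c 0 = i ∧
      (∀ m < r, A (c m) (c (m + 1)) ≠ 0) ∧
      ∑ j ∈ Finset.univ.erase (c r), |A (c r) j| < |A (c r) (c r)|) :
    A.det ≠ 0 :=
  wcdd_nonsingular_general A hweak hchain
end

section
/- Let G be a finite simple connected graph with at least three vertices and let v1, v2, v3 be three distinct vertices of G. Then the Tutte matrix T(G, v1, v2, v3) is weakly chained diagonally dominant: every row indexed by a pinned vertex is strictly diagonally dominant, every other row is weakly diagonally dominant, and for every vertex u there is a sequence of indices u = u_0, u_1, …, u_r with T u_m u_{m+1} ≠ 0 for all m < r and u_r ∈ {v1, v2, v3}. -/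
/- Pinned rows are rows of the identity matrix, and the row of an unpinned vertex `u` has
diagonal entry `deg u` and exactly `deg u` off-diagonal entries equal to `-1`, so every row is
weakly dominant and pinned rows strictly. For the chain condition, follow a walk from `u` to `v1`
and stop at its first pinned vertex: every earlier step leaves an unpinned vertex along an edge,
i.e. through a nonzero entry `-1`. -/

/-- The Tutte matrix of a graph `G` with pinned vertices `v1, v2, v3`:
the row of a pinned vertex has a `1` on the diagonal and `0` elsewhere;
the row of a non-pinned vertex `u` has `deg u` on the diagonal,
`-1` at the neighbours of `u`, and `0` elsewhere. -/
def tutteMatrix {V : Type*} [Fintype V] [DecidableEq V] (G : SimpleGraph V)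
    [DecidableRel G.Adj] (v1 v2 v3 : V) : Matrix V V ℚ :=
  fun u w =>
    if u = v1 ∨ u = v2 ∨ u = v3 then (if u = w then 1 else 0)
    else if u = w then (G.degree u : ℚ)
    else if G.Adj u w then -1 else 0

lemma SimpleGraph.Walk.exists_chain_ne_zero {V R : Type*} [Zero R] {G : SimpleGraph V}
    {A : Matrix V V R} {P : V → Prop} (hA : ∀ a b, ¬P a → G.Adj a b → A a b ≠ 0)
    {u t : V} (p : G.Walk u t) (ht : P t) :
    ∃ (r : ℕ) (c : ℕ → V), c 0 = u ∧ (∀ m < r, A (c m) (c (m + 1)) ≠ 0) ∧ P (c r) := by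
  induction p with
  | nil => exact ⟨0, fun _ => _, rfl, by simp, ht⟩
  | @cons a b _ hab _ ih =>
    by_cases ha : P a
    · exact ⟨0, fun _ => a, rfl, by simp, ha⟩
    obtain ⟨r, c, hc0, hchain, hend⟩ := ih ht
    refine ⟨r + 1, fun n => if n = 0 then a else c (n - 1), rfl, ?_, by simpa using hend⟩
    rintro (_ | k) hk
    · simpa [hc0] using hA a b ha hab
    · simpa using hchain k (by omega)

section tutteMatrix

variable {V : Type*} [Fintype V] [DecidableEq V] (G : SimpleGraph V) [DecidableRel G.Adj]
  {v1 v2 v3 u : V}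

lemma tutteMatrix_of_pinned (hu : u = v1 ∨ u = v2 ∨ u = v3) (w : V) :
    tutteMatrix G v1 v2 v3 u w = if u = w then 1 else 0 := by
  simp [tutteMatrix, hu]

lemma tutteMatrix_diag_of_not_pinned (hu : ¬(u = v1 ∨ u = v2 ∨ u = v3)) :
    tutteMatrix G v1 v2 v3 u u = G.degree u := by
  simp [tutteMatrix, hu]

lemma tutteMatrix_of_not_pinned_of_ne (hu : ¬(u = v1 ∨ u = v2 ∨ u = v3)) {w : V} (huw : u ≠ w) :
    tutteMatrix G v1 v2 v3 u w = if G.Adj u w then -1 else 0 := by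
  simp [tutteMatrix, hu, huw]

lemma sum_abs_tutteMatrix_offDiag_of_pinned (hu : u = v1 ∨ u = v2 ∨ u = v3) :
    ∑ w ∈ Finset.univ.erase u, |tutteMatrix G v1 v2 v3 u w| = 0 :=
  Finset.sum_eq_zero fun w hw => by
    simp [tutteMatrix_of_pinned G hu, (Finset.ne_of_mem_erase hw).symm]

lemma sum_abs_tutteMatrix_offDiag_of_not_pinned (hu : ¬(u = v1 ∨ u = v2 ∨ u = v3)) :
    ∑ w ∈ Finset.univ.erase u, |tutteMatrix G v1 v2 v3 u w| = G.degree u := by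
  have hrow : ∀ w ∈ Finset.univ.erase u,
      |tutteMatrix G v1 v2 v3 u w| = if G.Adj u w then 1 else 0 := fun w hw => by
    rw [tutteMatrix_of_not_pinned_of_ne G hu (Finset.ne_of_mem_erase hw).symm]
    split_ifs <;> simp
  rw [Finset.sum_congr rfl hrow, Finset.sum_erase _ (by simp), Finset.sum_boole,
    ← G.neighborFinset_eq_filter, G.card_neighborFinset_eq_degree]

lemma tutteMatrix_ne_zero_of_adj {a b : V} (ha : ¬(a = v1 ∨ a = v2 ∨ a = v3)) (hab : G.Adj a b) :
    tutteMatrix G v1 v2 v3 a b ≠ 0 := by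
  simp [tutteMatrix_of_not_pinned_of_ne G ha hab.ne, hab]

end tutteMatrix

theorem tutteMatrix_wcdd_general {V : Type*} [Fintype V] [DecidableEq V]
    (G : SimpleGraph V) [DecidableRel G.Adj] (hG : G.Connected)
    (v1 v2 v3 : V) :
    (∀ u : V, (u = v1 ∨ u = v2 ∨ u = v3) →
      ∑ w ∈ Finset.univ.erase u, |tutteMatrix G v1 v2 v3 u w| <
        |tutteMatrix G v1 v2 v3 u u|) ∧
    (∀ u : V,
      ∑ w ∈ Finset.univ.erase u, |tutteMatrix G v1 v2 v3 u w| ≤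
        |tutteMatrix G v1 v2 v3 u u|) ∧
    (∀ u : V, ∃ (r : ℕ) (c : ℕ → V), c 0 = u ∧
      (∀ m < r, tutteMatrix G v1 v2 v3 (c m) (c (m + 1)) ≠ 0) ∧
      (c r = v1 ∨ c r = v2 ∨ c r = v3)) := by
  have hpinned : ∀ u : V, (u = v1 ∨ u = v2 ∨ u = v3) →
      ∑ w ∈ Finset.univ.erase u, |tutteMatrix G v1 v2 v3 u w| <
        |tutteMatrix G v1 v2 v3 u u| := fun u hu => by
    rw [sum_abs_tutteMatrix_offDiag_of_pinned G hu, tutteMatrix_of_pinned G hu]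
    simp
  refine ⟨hpinned, fun u => ?_, fun u => ?_⟩
  · by_cases hu : u = v1 ∨ u = v2 ∨ u = v3
    · exact (hpinned u hu).le
    · rw [sum_abs_tutteMatrix_offDiag_of_not_pinned G hu, tutteMatrix_diag_of_not_pinned G hu,
        Nat.abs_cast]
  · exact (hG.preconnected u v1).some.exists_chain_ne_zero
      (fun _ _ => tutteMatrix_ne_zero_of_adj G) (Or.inl rfl)

/-- For a connected graph with at least three vertices and three distinct pinned
vertices, the Tutte matrix is weakly chained diagonally dominant: pinned rows are
strictly diagonally dominant, all rows are weakly diagonally dominant, and from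
each row there is a chain of nonzero entries leading to a pinned row. -/
theorem tutteMatrix_wcdd {V : Type*} [Fintype V] [DecidableEq V]
    (G : SimpleGraph V) [DecidableRel G.Adj] (hG : G.Connected)
    (hcard : 3 ≤ Fintype.card V)
    (v1 v2 v3 : V) (h12 : v1 ≠ v2) (h13 : v1 ≠ v3) (h23 : v2 ≠ v3) :
    (∀ u : V, (u = v1 ∨ u = v2 ∨ u = v3) →
      ∑ w ∈ Finset.univ.erase u, |tutteMatrix G v1 v2 v3 u w| <
        |tutteMatrix G v1 v2 v3 u u|) ∧
    (∀ u : V,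
      ∑ w ∈ Finset.univ.erase u, |tutteMatrix G v1 v2 v3 u w| ≤
        |tutteMatrix G v1 v2 v3 u u|) ∧
    (∀ u : V, ∃ (r : ℕ) (c : ℕ → V), c 0 = u ∧
      (∀ m < r, tutteMatrix G v1 v2 v3 (c m) (c (m + 1)) ≠ 0) ∧
      (c r = v1 ∨ c r = v2 ∨ c r = v3)) :=
  tutteMatrix_wcdd_general G hG v1 v2 v3
end

section
/- Let G be a finite simple connected graph with at least three vertices and let v1, v2, v3 be three distinct vertices of G. Then the Tutte matrix T(G, v1, v2, v3) is invertible over ℚ, i.e. det T(G, v1, v2, v3) ≠ 0. (In particular, for every 3-connected planar graph G and any three of its vertices, the pair (G, v1, v2, v3) is embedding-inducing in the sense of the paper.) -/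
open Matrix

namespace SimpleGraph

variable {V K : Type*} [Fintype V] {G : SimpleGraph V} [DecidableRel G.Adj]
  [Field K] [LinearOrder K] [IsStrictOrderedRing K]

theorem apply_eq_of_adj_of_degree_mul_eq_sum {x : V → K} {u w : V}
    (hharm : G.degree u * x u = ∑ w ∈ G.neighborFinset u, x w)
    (hle : ∀ w ∈ G.neighborFinset u, x w ≤ x u) (hadj : G.Adj u w) : x w = x u := by
  have hsum : ∑ w ∈ G.neighborFinset u, x w = ∑ _w ∈ G.neighborFinset u, x u := by
    rw [← hharm, Finset.sum_const, card_neighborFinset_eq_degree, nsmul_eq_mul]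
  exact (Finset.sum_eq_sum_iff_of_le hle).mp hsum w ((mem_neighborFinset G u w).mpr hadj)

theorem Preconnected.exists_mem_apply_eq_of_forall_le (hG : G.Preconnected) {S : Set V} {s : V}
    (hs : s ∈ S) {x : V → K}
    (hharm : ∀ u ∉ S, G.degree u * x u = ∑ w ∈ G.neighborFinset u, x w)
    {u₀ : V} (hmax : ∀ u, x u ≤ x u₀) : ∃ s ∈ S, x s = x u₀ := by
  suffices h : ∀ a b (p : G.Walk a b), b ∈ S → x a = x u₀ → ∃ s ∈ S, x s = x u₀ from
    h u₀ s (hG u₀ s).some hs rfl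
  intro a b p hb ha
  induction p with
  | nil => exact ⟨_, hb, ha⟩
  | @cons a c b hac p ih =>
    by_cases haS : a ∈ S
    · exact ⟨a, haS, ha⟩
    · refine ih hb ?_
      rw [apply_eq_of_adj_of_degree_mul_eq_sum (hharm a haS) (fun w _ => ha ▸ hmax w) hac, ha]

end SimpleGraph

section TutteMatrix

variable {V : Type*} [Fintype V] [DecidableEq V] {G : SimpleGraph V} [DecidableRel G.Adj]
  {v1 v2 v3 u : V}

theorem tutteMatrix_mulVec_apply_of_pinned (x : V → ℚ) (hu : u = v1 ∨ u = v2 ∨ u = v3) :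
    (tutteMatrix G v1 v2 v3 *ᵥ x) u = x u := by
  simp [Matrix.mulVec, dotProduct, tutteMatrix, hu]

theorem tutteMatrix_row_eq_lapMatrix_row (hu : ¬(u = v1 ∨ u = v2 ∨ u = v3)) :
    tutteMatrix G v1 v2 v3 u = G.lapMatrix ℚ u := by
  ext w
  by_cases huw : u = w
  · subst huw
    simp [tutteMatrix, hu, SimpleGraph.lapMatrix, SimpleGraph.degMatrix]
  · by_cases hadj : G.Adj u w <;>
      simp [tutteMatrix, hu, huw, hadj, SimpleGraph.lapMatrix, SimpleGraph.degMatrix,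
        Matrix.diagonal_apply_ne]

theorem tutteMatrix_mulVec_apply_of_not_pinned (x : V → ℚ) (hu : ¬(u = v1 ∨ u = v2 ∨ u = v3)) :
    (tutteMatrix G v1 v2 v3 *ᵥ x) u = G.degree u * x u - ∑ w ∈ G.neighborFinset u, x w := by
  rw [← G.lapMatrix_mulVec_apply, Matrix.mulVec, Matrix.mulVec, tutteMatrix_row_eq_lapMatrix_row hu]

theorem le_zero_of_tutteMatrix_mulVec_eq_zero (hG : G.Preconnected) {x : V → ℚ}
    (hx : tutteMatrix G v1 v2 v3 *ᵥ x = 0) (u : V) : x u ≤ 0 := by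
  have : Nonempty V := ⟨u⟩
  obtain ⟨u₀, hmax⟩ := Finite.exists_max x
  have hharm : ∀ w ∉ {w | w = v1 ∨ w = v2 ∨ w = v3},
      G.degree w * x w = ∑ w' ∈ G.neighborFinset w, x w' := fun w hw =>
    sub_eq_zero.mp ((tutteMatrix_mulVec_apply_of_not_pinned x hw).symm.trans (congrFun hx w))
  obtain ⟨s, hs, hxs⟩ := hG.exists_mem_apply_eq_of_forall_le (Or.inl rfl) hharm hmax
  have hs0 : x s = 0 := (tutteMatrix_mulVec_apply_of_pinned x hs).symm.trans (congrFun hx s)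
  exact (hmax u).trans (hxs ▸ hs0).le

end TutteMatrix

theorem tutteMatrix_det_ne_zero_general {V : Type*} [Fintype V] [DecidableEq V]
    (G : SimpleGraph V) [DecidableRel G.Adj] (hG : G.Connected)
    (v1 v2 v3 : V) :
    (tutteMatrix G v1 v2 v3).det ≠ 0 := by
  intro hdet
  obtain ⟨x, hx0, hx⟩ := Matrix.exists_mulVec_eq_zero_iff.mpr hdet
  have hnx : tutteMatrix G v1 v2 v3 *ᵥ -x = 0 := by rw [Matrix.mulVec_neg, hx, neg_zero]
  refine hx0 (funext fun u => le_antisymm ?_ ?_)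
  · exact le_zero_of_tutteMatrix_mulVec_eq_zero hG.preconnected hx u
  · simpa using le_zero_of_tutteMatrix_mulVec_eq_zero hG.preconnected hnx u

/-- For a connected graph with at least three vertices and three distinct pinned
vertices, the Tutte matrix is invertible over `ℚ`, i.e. has nonzero determinant. -/
theorem tutteMatrix_det_ne_zero {V : Type*} [Fintype V] [DecidableEq V]
    (G : SimpleGraph V) [DecidableRel G.Adj] (hG : G.Connected)
    (hcard : 3 ≤ Fintype.card V)
    (v1 v2 v3 : V) (h12 : v1 ≠ v2) (h13 : v1 ≠ v3) (h23 : v2 ≠ v3) :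
    (tutteMatrix G v1 v2 v3).det ≠ 0 :=
  tutteMatrix_det_ne_zero_general G hG v1 v2 v3
end

section
/- Let G1 and G2 be finite simple graphs on disjoint vertex sets, each of which is 3-connected. Let v1, v2, v3 be three distinct vertices of G1 and let v4, v5, v6 be three distinct vertices of G2. Let G be the graph on the disjoint union of the vertex sets of G1 and G2 whose edges are the edges of G1, the edges of G2, and the three additional edges {v1, v4}, {v2, v5}, {v3, v6}. Then G is 3-connected. -/
/-- A finite simple graph is `k`-connected if it has more than `k` vertices and
removing any set of fewer than `k` vertices leaves it connected. -/
def KConnected {V : Type*} [Fintype V] (G : SimpleGraph V) (k : ℕ) : Prop :=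
  k < Fintype.card V ∧ ∀ S : Set V, S.ncard < k → (G.induce Sᶜ).Connected

/-- The graph on the disjoint union of the vertex sets of `G1` and `G2` whose
edges are those of `G1`, those of `G2`, and the three additional edges
`(v1, v4), (v2, v5), (v3, v6)`. -/
def joinGraph {V1 V2 : Type*} (G1 : SimpleGraph V1) (G2 : SimpleGraph V2)
    (v1 v2 v3 : V1) (v4 v5 v6 : V2) : SimpleGraph (V1 ⊕ V2) where
  Adj u w :=
    match u, w with
    | Sum.inl x, Sum.inl y => G1.Adj x y
    | Sum.inr x, Sum.inr y => G2.Adj x y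
    | Sum.inl x, Sum.inr y => (x = v1 ∧ y = v4) ∨ (x = v2 ∧ y = v5) ∨ (x = v3 ∧ y = v6)
    | Sum.inr y, Sum.inl x => (x = v1 ∧ y = v4) ∨ (x = v2 ∧ y = v5) ∨ (x = v3 ∧ y = v6)
  symm := by
    constructor
    rintro (x | x) (y | y) h
    · exact G1.adj_symm h
    · exact h
    · exact h
    · exact G2.adj_symm h
  loopless := by
    constructor
    rintro (x | x) h
    · exact G1.irrefl h
    · exact G2.irrefl h

/-- Joining two 3-connected graphs by three independent edges between two
triples of distinct vertices yields a 3-connected graph. -/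
theorem joinGraph_threeConnected {V1 V2 : Type*} [Fintype V1] [Fintype V2]
    (G1 : SimpleGraph V1) (G2 : SimpleGraph V2)
    (h1 : KConnected G1 3) (h2 : KConnected G2 3)
    (v1 v2 v3 : V1) (v4 v5 v6 : V2)
    (h12 : v1 ≠ v2) (h13 : v1 ≠ v3) (h23 : v2 ≠ v3)
    (h45 : v4 ≠ v5) (h46 : v4 ≠ v6) (h56 : v5 ≠ v6) :
    KConnected (joinGraph G1 G2 v1 v2 v3 v4 v5 v6) 3 := by

  obtain ⟨hc1, hconn1⟩ := h1
  obtain ⟨hc2, hconn2⟩ := h2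
  constructor
  · have hcs : Fintype.card (V1 ⊕ V2) = Fintype.card V1 + Fintype.card V2 := Fintype.card_sum
    omega
  intro S hS
  set G := joinGraph G1 G2 v1 v2 v3 v4 v5 v6 with hG
  set S1 : Set V1 := Sum.inl ⁻¹' S with hS1def
  set S2 : Set V2 := Sum.inr ⁻¹' S with hS2def
  have hS1 : S1.ncard < 3 := by
    calc S1.ncard = (Sum.inl '' S1 : Set (V1 ⊕ V2)).ncard :=
          (Set.ncard_image_of_injective _ Sum.inl_injective).symm
      _ ≤ S.ncard := Set.ncard_le_ncard (Set.image_preimage_subset _ _) S.toFinite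
      _ < 3 := hS
  have hS2 : S2.ncard < 3 := by
    calc S2.ncard = (Sum.inr '' S2 : Set (V1 ⊕ V2)).ncard :=
          (Set.ncard_image_of_injective _ Sum.inr_injective).symm
      _ ≤ S.ncard := Set.ncard_le_ncard (Set.image_preimage_subset _ _) S.toFinite
      _ < 3 := hS
  have hC1 := hconn1 S1 hS1
  have hC2 := hconn2 S2 hS2
  -- reachability within the left side
  have left : ∀ (x y : V1) (hx : Sum.inl x ∈ Sᶜ) (hy : Sum.inl y ∈ Sᶜ),
      (G.induce Sᶜ).Reachable ⟨Sum.inl x, hx⟩ ⟨Sum.inl y, hy⟩ := by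
    intro x y hx hy
    let φ : G1.induce S1ᶜ →g G.induce Sᶜ :=
      ⟨fun p => ⟨Sum.inl p.1, p.2⟩, fun {a b} h => h⟩
    exact (hC1.preconnected ⟨x, hx⟩ ⟨y, hy⟩).map φ
  have right : ∀ (x y : V2) (hx : Sum.inr x ∈ Sᶜ) (hy : Sum.inr y ∈ Sᶜ),
      (G.induce Sᶜ).Reachable ⟨Sum.inr x, hx⟩ ⟨Sum.inr y, hy⟩ := by
    intro x y hx hy
    let φ : G2.induce S2ᶜ →g G.induce Sᶜ :=
      ⟨fun p => ⟨Sum.inr p.1, p.2⟩, fun {a b} h => h⟩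
    exact (hC2.preconnected ⟨x, hx⟩ ⟨y, hy⟩).map φ
  -- a surviving cross edge
  have hedge : ∃ (a : V1) (b : V2), G.Adj (Sum.inl a) (Sum.inr b) ∧
      Sum.inl a ∈ Sᶜ ∧ Sum.inr b ∈ Sᶜ := by
    by_contra hcon
    push_neg at hcon
    have e1 : ∃ s ∈ S, s = Sum.inl v1 ∨ s = (Sum.inr v4 : V1 ⊕ V2) := by
      by_contra hh; push_neg at hh
      have hb := hcon v1 v4 (Or.inl ⟨rfl, rfl⟩)
        (fun hmem => (hh _ hmem).1 rfl)
      exact hb (fun hmem => (hh _ hmem).2 rfl)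
    have e2 : ∃ s ∈ S, s = Sum.inl v2 ∨ s = (Sum.inr v5 : V1 ⊕ V2) := by
      by_contra hh; push_neg at hh
      have hb := hcon v2 v5 (Or.inr (Or.inl ⟨rfl, rfl⟩))
        (fun hmem => (hh _ hmem).1 rfl)
      exact hb (fun hmem => (hh _ hmem).2 rfl)
    have e3 : ∃ s ∈ S, s = Sum.inl v3 ∨ s = (Sum.inr v6 : V1 ⊕ V2) := by
      by_contra hh; push_neg at hh
      have hb := hcon v3 v6 (Or.inr (Or.inr ⟨rfl, rfl⟩))
        (fun hmem => (hh _ hmem).1 rfl)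
      exact hb (fun hmem => (hh _ hmem).2 rfl)
    obtain ⟨s1, hs1, hs1e⟩ := e1
    obtain ⟨s2, hs2, hs2e⟩ := e2
    obtain ⟨s3, hs3, hs3e⟩ := e3
    have ne12 : s1 ≠ s2 := by rcases hs1e with h | h <;> rcases hs2e with h' | h' <;>
      simp_all
    have ne13 : s1 ≠ s3 := by rcases hs1e with h | h <;> rcases hs3e with h' | h' <;>
      simp_all
    have ne23 : s2 ≠ s3 := by rcases hs2e with h | h <;> rcases hs3e with h' | h' <;>
      simp_all
    have h3 : ({s1, s2, s3} : Set (V1 ⊕ V2)).ncard = 3 :=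
      Set.ncard_eq_three.mpr ⟨s1, s2, s3, ne12, ne13, ne23, rfl⟩
    have hle : ({s1, s2, s3} : Set (V1 ⊕ V2)).ncard ≤ S.ncard :=
      Set.ncard_le_ncard (by
        intro t ht
        rcases ht with h | h | h <;> subst h <;> assumption) S.toFinite
    omega
  obtain ⟨a, b, hadj, ha, hb⟩ := hedge
  have hedgeR : (G.induce Sᶜ).Reachable ⟨Sum.inl a, ha⟩ ⟨Sum.inr b, hb⟩ :=
    SimpleGraph.Adj.reachable hadj
  have hne : Nonempty (↥Sᶜ) := by
    obtain ⟨⟨x, hx⟩⟩ := hC1.nonempty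
    exact ⟨⟨Sum.inl x, hx⟩⟩
  have hpre : (G.induce Sᶜ).Preconnected := by
    intro u w
    obtain ⟨(x | x), hx⟩ := u <;> obtain ⟨(y | y), hy⟩ := w
    · exact left x y hx hy
    · exact ((left x a hx ha).trans hedgeR).trans (right b y hb hy)
    · exact (((left y a hy ha).trans hedgeR).trans (right b x hb hx)).symm
    · exact right x y hx hy
  exact { preconnected := hpre, nonempty := hne }
end

section
/- Let G be a finite simple 3-connected graph and let v1, v2, v3, v4 be vertices that in this order form an induced cycle of G: the four vertices are pairwise distinct, {v1, v2}, {v2, v3}, {v3, v4}, {v4, v1} are edges of G, and {v1, v3}, {v2, v4} are not edges of G. Let G' be the graph obtained from G by adding two new vertices v and v' together with exactly the five edges {v, v'}, {v, v1}, {v, v2}, {v', v3}, {v', v4}. Then G' is 3-connected. -/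
/-- The graph obtained from `G` by adding two new vertices `v = inr false` and
`v' = inr true`, joined by the edge `(v, v')`, with `v` attached to `v1, v2` and
`v'` attached to `v3, v4`. -/
def addTwoVertices {V : Type*} (G : SimpleGraph V) (v1 v2 v3 v4 : V) :
    SimpleGraph (V ⊕ Bool) where
  Adj u w :=
    match u, w with
    | Sum.inl x, Sum.inl y => G.Adj x y
    | Sum.inl x, Sum.inr b => (b = false ∧ (x = v1 ∨ x = v2)) ∨ (b = true ∧ (x = v3 ∨ x = v4))
    | Sum.inr b, Sum.inl x => (b = false ∧ (x = v1 ∨ x = v2)) ∨ (b = true ∧ (x = v3 ∨ x = v4))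
    | Sum.inr b, Sum.inr c => b ≠ c
  symm := by
    constructor
    rintro (x | b) (y | c) h
    · exact G.adj_symm h
    · exact h
    · exact h
    · exact h.symm
  loopless := by
    constructor
    rintro (x | b) h
    · exact G.irrefl h
    · exact h rfl

/-- Attaching two new adjacent vertices to an induced 4-cycle `v1 v2 v3 v4` of a
3-connected graph (with `v` joined to `v1, v2` and `v'` joined to `v3, v4`)
yields a 3-connected graph. -/
theorem addTwoVertices_threeConnected {V : Type*} [Fintype V]
    (G : SimpleGraph V) (h3 : KConnected G 3) (v1 v2 v3 v4 : V)
    (h12 : v1 ≠ v2) (h13 : v1 ≠ v3) (h14 : v1 ≠ v4)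
    (h23 : v2 ≠ v3) (h24 : v2 ≠ v4) (h34 : v3 ≠ v4)
    (e12 : G.Adj v1 v2) (e23 : G.Adj v2 v3) (e34 : G.Adj v3 v4) (e41 : G.Adj v4 v1)
    (ne13 : ¬ G.Adj v1 v3) (ne24 : ¬ G.Adj v2 v4) :
    KConnected (addTwoVertices G v1 v2 v3 v4) 3 := by
  classical
  set G' := addTwoVertices G v1 v2 v3 v4 with hG'
  have hcard := h3.1
  constructor
  · simp only [Fintype.card_sum, Fintype.card_bool]
    omega
  intro S hS
  set T : Set V := Sum.inl ⁻¹' S with hTdef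
  have hTS : Sum.inl '' T ⊆ S := by rintro _ ⟨x, hx, rfl⟩; exact hx
  have hT : T.ncard < 3 := by
    have h1 : T.ncard = (Sum.inl '' T : Set (V ⊕ Bool)).ncard :=
      (Set.ncard_image_of_injective _ Sum.inl_injective).symm
    have h2 : (Sum.inl '' T : Set (V ⊕ Bool)).ncard ≤ S.ncard :=
      Set.ncard_le_ncard hTS S.toFinite
    omega
  have hGc := h3.2 T hT
  have hmem : ∀ x : V, x ∈ Tᶜ → Sum.inl x ∈ Sᶜ := fun x hx => hx
  let f : G.induce Tᶜ →g (G'.induce Sᶜ) :=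
    { toFun := fun x => ⟨Sum.inl x.1, hmem x.1 x.2⟩
      map_rel' := fun h => h }
  have hreach : ∀ x y (hx : x ∈ Tᶜ) (hy : y ∈ Tᶜ),
      (G'.induce Sᶜ).Reachable ⟨Sum.inl x, hmem x hx⟩ ⟨Sum.inl y, hmem y hy⟩ :=
    fun x y hx hy => (hGc.preconnected ⟨x, hx⟩ ⟨y, hy⟩).map f
  have hTne : Tᶜ.Nonempty := by
    rw [Set.nonempty_compl]
    intro h
    rw [h, Set.ncard_univ, Nat.card_eq_fintype_card] at hT
    omega
  have key : ∀ a : ↥(Sᶜ), ∃ x, ∃ hx : x ∈ Tᶜ,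
      (G'.induce Sᶜ).Reachable a ⟨Sum.inl x, hmem x hx⟩ := by
    rintro ⟨(x | b), ha⟩
    · exact ⟨x, ha, SimpleGraph.Reachable.refl _⟩
    cases b
    · -- inr false, neighbors v1, v2
      by_cases hv1 : Sum.inl v1 ∈ S
      · by_cases hv2 : Sum.inl v2 ∈ S
        · -- S = {inl v1, inl v2}
          have hsub : ({Sum.inl v1, Sum.inl v2} : Set (V ⊕ Bool)) ⊆ S := by
            rintro z (rfl | rfl) <;> assumption
          have hpair : ({Sum.inl v1, Sum.inl v2} : Set (V ⊕ Bool)).ncard = 2 :=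
            Set.ncard_pair (by simpa using h12)
          have hSeq : S = ({Sum.inl v1, Sum.inl v2} : Set (V ⊕ Bool)) :=
            (Set.eq_of_subset_of_ncard_le hsub (by omega) S.toFinite).symm
          have htrue : (Sum.inr true : V ⊕ Bool) ∈ Sᶜ := by
            rw [hSeq]; simp
          have hv3 : v3 ∈ Tᶜ := by
            intro hx
            have : (Sum.inl v3 : V ⊕ Bool) ∈ S := hx
            rw [hSeq] at this
            rcases this with h | h
            · exact h13 (Sum.inl_injective h).symm
            · exact h23 (Sum.inl_injective h).symm
          refine ⟨v3, hv3, ?_⟩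
          have a1 : (G'.induce Sᶜ).Adj ⟨Sum.inr false, ha⟩ ⟨Sum.inr true, htrue⟩ := by
            show G'.Adj (Sum.inr false) (Sum.inr true)
            simp [hG', addTwoVertices]
          have a2 : (G'.induce Sᶜ).Adj ⟨Sum.inr true, htrue⟩ ⟨Sum.inl v3, hmem v3 hv3⟩ := by
            show G'.Adj (Sum.inr true) (Sum.inl v3)
            exact Or.inr ⟨rfl, Or.inl rfl⟩
          exact a1.reachable.trans a2.reachable
        · refine ⟨v2, hv2, SimpleGraph.Adj.reachable ?_⟩
          show G'.Adj (Sum.inr false) (Sum.inl v2)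
          exact Or.inl ⟨rfl, Or.inr rfl⟩
      · refine ⟨v1, hv1, SimpleGraph.Adj.reachable ?_⟩
        show G'.Adj (Sum.inr false) (Sum.inl v1)
        exact Or.inl ⟨rfl, Or.inl rfl⟩
    · -- inr true, neighbors v3, v4
      by_cases hv3 : Sum.inl v3 ∈ S
      · by_cases hv4 : Sum.inl v4 ∈ S
        · have hsub : ({Sum.inl v3, Sum.inl v4} : Set (V ⊕ Bool)) ⊆ S := by
            rintro z (rfl | rfl) <;> assumption
          have hpair : ({Sum.inl v3, Sum.inl v4} : Set (V ⊕ Bool)).ncard = 2 :=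
            Set.ncard_pair (by simpa using h34)
          have hSeq : S = ({Sum.inl v3, Sum.inl v4} : Set (V ⊕ Bool)) :=
            (Set.eq_of_subset_of_ncard_le hsub (by omega) S.toFinite).symm
          have hfalse : (Sum.inr false : V ⊕ Bool) ∈ Sᶜ := by
            rw [hSeq]; simp
          have hv1c : v1 ∈ Tᶜ := by
            intro hx
            have : (Sum.inl v1 : V ⊕ Bool) ∈ S := hx
            rw [hSeq] at this
            rcases this with h | h
            · exact h13 (Sum.inl_injective h)
            · exact h14 (Sum.inl_injective h)
          refine ⟨v1, hv1c, ?_⟩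
          have a1 : (G'.induce Sᶜ).Adj ⟨Sum.inr true, ha⟩ ⟨Sum.inr false, hfalse⟩ := by
            show G'.Adj (Sum.inr true) (Sum.inr false)
            simp [hG', addTwoVertices]
          have a2 : (G'.induce Sᶜ).Adj ⟨Sum.inr false, hfalse⟩ ⟨Sum.inl v1, hmem v1 hv1c⟩ := by
            show G'.Adj (Sum.inr false) (Sum.inl v1)
            exact Or.inl ⟨rfl, Or.inl rfl⟩
          exact a1.reachable.trans a2.reachable
        · refine ⟨v4, hv4, SimpleGraph.Adj.reachable ?_⟩
          show G'.Adj (Sum.inr true) (Sum.inl v4)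
          exact Or.inr ⟨rfl, Or.inr rfl⟩
      · refine ⟨v3, hv3, SimpleGraph.Adj.reachable ?_⟩
        show G'.Adj (Sum.inr true) (Sum.inl v3)
        exact Or.inr ⟨rfl, Or.inl rfl⟩
  obtain ⟨x0, hx0⟩ := hTne
  have hne : Nonempty ↥(Sᶜ) := ⟨⟨Sum.inl x0, hmem x0 hx0⟩⟩
  refine SimpleGraph.Connected.mk ?_
  intro a b
  obtain ⟨x, hx, hax⟩ := key a
  obtain ⟨y, hy, hby⟩ := key b
  exact hax.trans ((hreach x y hx hy).trans hby.symm)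
end
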